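/- The graph F₂,₀ contains a cycle with exactly 14 vertices, and every cycle in F₂,₀ has at most 14 vertices; that is, a longest cycle of F₂,₀ has 14 vertices (in particular, F₂,₀ is not Hamiltonian). -/

import Mathlib

/-!
A Hamiltonian cycle of `F₂,₀` would be a spanning `2`-regular subgraph `H`. A white vertex has
only one neighbour off the triangle `b₁b₂b₃`, so it sends at least one `H`-edge to the
triangle. The triangle has only six `H`-edge slots and there are six white vertices, so every
white vertex sends exactly one and every `H`-edge at the triangle ends in a white vertex.
Exactly three `H`-edges then leave the first copy `{g₁, g₂, g₃, w₁, w₂, w₃}`, whereas an even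
number of edges of a `2`-regular graph leaves any vertex set. Hence every cycle has at most
14 vertices, and a 14-cycle is exhibited explicitly.
-/

/-- The graph `F₂,₀` on 15 vertices: `0,1,2` are the black triangle vertices
`b₁,b₂,b₃`; the first copy of the non-outer part of `T` has `g`-vertices
`3,4,5` and white (simplicial) vertices `6,7,8`; the second copy has
`g`-vertices `9,10,11` and white (simplicial) vertices `12,13,14`. -/
def F20 : SimpleGraph (Fin 15) :=
  SimpleGraph.fromRel fun a b =>
    (a, b) ∈ ([(0,1),(0,2),(1,2),
      (3,4),(3,5),(4,5),(3,0),(3,1),(4,1),(4,2),(5,2),(5,0),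
      (6,0),(6,1),(6,3),(7,1),(7,2),(7,4),(8,2),(8,0),(8,5),
      (9,10),(9,11),(10,11),(9,0),(9,1),(10,1),(10,2),(11,2),(11,0),
      (12,0),(12,1),(12,9),(13,1),(13,2),(13,10),(14,2),(14,0),(14,11)] :
        List (Fin 15 × Fin 15))

open Finset

namespace SimpleGraph

variable {V : Type*} [Fintype V]

theorem Walk.IsCycle.length_le_card {G : SimpleGraph V} {u : V} {p : G.Walk u u}
    (hp : p.IsCycle) : p.length ≤ Fintype.card V := by
  rw [← Walk.length_tail_add_one hp.not_nil]
  exact hp.isPath_tail.length_lt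

theorem Walk.IsHamiltonianCycle.isRegularOfDegree_two [DecidableEq V] {G : SimpleGraph V}
    {u : V} {p : G.Walk u u} (hp : p.IsHamiltonianCycle)
    [DecidableRel p.toSubgraph.spanningCoe.Adj] :
    p.toSubgraph.spanningCoe.IsRegularOfDegree 2 := fun v => by
  rw [← card_neighborSet_eq_degree, ← Nat.card_eq_fintype_card, Nat.card_coe_set_eq]
  exact hp.isCycle.ncard_neighborSet_toSubgraph_eq_two (hp.mem_support v)

theorem neighborFinset_mono {G H : SimpleGraph V} [DecidableRel G.Adj] [DecidableRel H.Adj]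
    (h : H ≤ G) (v : V) : H.neighborFinset v ⊆ G.neighborFinset v := fun w hw =>
  (G.mem_neighborFinset v w).2 (h ((H.mem_neighborFinset v w).1 hw))

variable [DecidableEq V] (G : SimpleGraph V) [DecidableRel G.Adj]

theorem sum_card_neighborFinset_inter_comm (s t : Finset V) :
    ∑ v ∈ s, #(G.neighborFinset v ∩ t) = ∑ v ∈ t, #(G.neighborFinset v ∩ s) := by
  have h := sum_card_bipartiteAbove_eq_sum_card_bipartiteBelow (s := s) (t := t) G.Adj
  simp only [bipartiteAbove, bipartiteBelow] at h
  convert h using 2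
  · congr 1; ext; simp [and_comm]
  · congr 1; ext; simp [and_comm, G.adj_comm]

theorem even_sum_card_neighborFinset_inter (s : Finset V) :
    Even (∑ v ∈ s, #(G.neighborFinset v ∩ s)) := by
  refine ⟨#(G.induce (s : Set V)).edgeFinset, ?_⟩
  rw [← two_mul, ← sum_degrees_eq_twice_card_edges, ← sum_coe_sort s]
  refine sum_congr rfl fun v _ => ?_
  have h := congrArg card (G.map_neighborFinset_induce (s := (s : Set V)) v)
  rw [card_map, Finset.toFinset_coe, card_neighborFinset_eq_degree] at h
  convert h.symm

theorem even_sum_card_neighborFinset_sdiff (s : Finset V) (h : ∀ v ∈ s, Even (G.degree v)) :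
    Even (∑ v ∈ s, #(G.neighborFinset v \ s)) := by
  have hsplit : ∑ v ∈ s, G.degree v =
      ∑ v ∈ s, #(G.neighborFinset v ∩ s) + ∑ v ∈ s, #(G.neighborFinset v \ s) := by
    rw [← sum_add_distrib]
    exact sum_congr rfl fun v _ => by rw [card_inter_add_card_sdiff, card_neighborFinset_eq_degree]
  have heven : Even (∑ v ∈ s, G.degree v) := Finset.even_sum _ h
  rw [hsplit, Nat.even_add] at heven
  exact heven.mp (G.even_sum_card_neighborFinset_inter s)

end SimpleGraph

instance : DecidableRel F20.Adj := fun a b =>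
  decidable_of_iff' _ (SimpleGraph.fromRel_adj _ a b)

open SimpleGraph

namespace F20

def black : Finset (Fin 15) := {0, 1, 2}

def white : Finset (Fin 15) := {6, 7, 8, 12, 13, 14}

def firstCopy : Finset (Fin 15) := {3, 4, 5, 6, 7, 8}

theorem card_neighborFinset_sdiff_black (w : Fin 15) (hw : w ∈ white) :
    #(F20.neighborFinset w \ black) = 1 := by
  revert w; decide

theorem neighborFinset_sdiff_firstCopy_subset_black (v : Fin 15) (hv : v ∈ firstCopy) :
    F20.neighborFinset v \ firstCopy ⊆ black := by
  revert v; decide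

theorem disjoint_black_firstCopy : Disjoint black firstCopy := by decide

theorem card_filter_mem_white_firstCopy : #{v ∈ firstCopy | v ∈ white} = 3 := by decide

variable {H : SimpleGraph (Fin 15)} [DecidableRel H.Adj]

theorem one_le_card_neighborFinset_inter_black (hH : H ≤ F20) (h2 : H.IsRegularOfDegree 2)
    {w : Fin 15} (hw : w ∈ white) : 1 ≤ #(H.neighborFinset w ∩ black) := by
  have hsplit := card_inter_add_card_sdiff (H.neighborFinset w) black
  have hout : #(H.neighborFinset w \ black) ≤ 1 :=
    card_neighborFinset_sdiff_black w hw ▸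
      card_le_card (sdiff_subset_sdiff (neighborFinset_mono hH w) subset_rfl)
  rw [card_neighborFinset_eq_degree, h2.degree_eq] at hsplit
  omega

theorem sum_card_neighborFinset_inter_black (hH : H ≤ F20) (h2 : H.IsRegularOfDegree 2) :
    ∑ w ∈ white, #(H.neighborFinset w ∩ black) = 6 := by
  have hge : ∑ w ∈ white, 1 ≤ ∑ w ∈ white, #(H.neighborFinset w ∩ black) :=
    sum_le_sum fun w hw => one_le_card_neighborFinset_inter_black hH h2 hw
  have hle : ∑ b ∈ black, #(H.neighborFinset b ∩ white) ≤ ∑ b ∈ black, H.degree b :=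
    sum_le_sum fun b _ => card_neighborFinset_eq_degree H b ▸ card_le_card inter_subset_left
  simp only [h2.degree_eq, ← H.sum_card_neighborFinset_inter_comm white black] at hle
  exact le_antisymm hle hge

theorem card_neighborFinset_inter_black (hH : H ≤ F20) (h2 : H.IsRegularOfDegree 2)
    {w : Fin 15} (hw : w ∈ white) : #(H.neighborFinset w ∩ black) = 1 :=
  ((sum_eq_sum_iff_of_le fun _ hv => one_le_card_neighborFinset_inter_black hH h2 hv).1
    (sum_card_neighborFinset_inter_black hH h2).symm w hw).symm

theorem neighborFinset_subset_white (hH : H ≤ F20) (h2 : H.IsRegularOfDegree 2)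
    {b : Fin 15} (hb : b ∈ black) : H.neighborFinset b ⊆ white := by
  have hle (c) (_ : c ∈ black) : #(H.neighborFinset c ∩ white) ≤ #(H.neighborFinset c) :=
    card_le_card inter_subset_left
  have hsum :
      ∑ c ∈ black, #(H.neighborFinset c ∩ white) = ∑ c ∈ black, #(H.neighborFinset c) := by
    simp only [← H.sum_card_neighborFinset_inter_comm white black,
      sum_card_neighborFinset_inter_black hH h2, card_neighborFinset_eq_degree, h2.degree_eq]
    rfl
  have hcard := (sum_eq_sum_iff_of_le hle).1 hsum b hb
  exact inter_eq_left.1 (eq_of_subset_of_card_le inter_subset_left hcard.ge)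

theorem neighborFinset_sdiff_firstCopy (hH : H ≤ F20) {v : Fin 15} (hv : v ∈ firstCopy) :
    H.neighborFinset v \ firstCopy = H.neighborFinset v ∩ black := by
  ext u
  simp only [mem_sdiff, mem_inter]
  refine ⟨fun ⟨hu, hux⟩ => ⟨hu, ?_⟩, fun ⟨hu, hub⟩ => ⟨hu, ?_⟩⟩
  · exact neighborFinset_sdiff_firstCopy_subset_black v hv
      (mem_sdiff.2 ⟨neighborFinset_mono hH v hu, hux⟩)
  · exact disjoint_left.1 disjoint_black_firstCopy hub

theorem not_isRegularOfDegree_two (hH : H ≤ F20) : ¬ H.IsRegularOfDegree 2 := by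
  intro h2
  have hcut (v) (hv : v ∈ firstCopy) :
      #(H.neighborFinset v \ firstCopy) = if v ∈ white then 1 else 0 := by
    rw [neighborFinset_sdiff_firstCopy hH hv]
    split_ifs with hw
    · exact card_neighborFinset_inter_black hH h2 hw
    · refine card_eq_zero.2 (eq_empty_of_forall_notMem fun b hb => hw ?_)
      rw [mem_inter, mem_neighborFinset] at hb
      exact neighborFinset_subset_white hH h2 hb.2 ((H.mem_neighborFinset b v).2 hb.1.symm)
  have heven := H.even_sum_card_neighborFinset_sdiff firstCopy fun v _ => by
    rw [h2.degree_eq]; exact even_two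
  rw [sum_congr rfl hcut, sum_boole, card_filter_mem_white_firstCopy] at heven
  exact absurd heven (by decide)

theorem not_isHamiltonianCycle {u : Fin 15} (p : F20.Walk u u) : ¬ p.IsHamiltonianCycle := by
  classical
  exact fun hp => not_isRegularOfDegree_two p.toSubgraph.spanningCoe_le hp.isRegularOfDegree_two

def cycle14 : F20.Walk 0 0 :=
  .cons (show F20.Adj 0 6 by decide) <| .cons (show F20.Adj 6 3 by decide) <|
  .cons (show F20.Adj 3 5 by decide) <| .cons (show F20.Adj 5 8 by decide) <|
  .cons (show F20.Adj 8 2 by decide) <| .cons (show F20.Adj 2 7 by decide) <|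
  .cons (show F20.Adj 7 4 by decide) <| .cons (show F20.Adj 4 1 by decide) <|
  .cons (show F20.Adj 1 13 by decide) <| .cons (show F20.Adj 13 10 by decide) <|
  .cons (show F20.Adj 10 11 by decide) <| .cons (show F20.Adj 11 9 by decide) <|
  .cons (show F20.Adj 9 12 by decide) <| .cons (show F20.Adj 12 0 by decide) .nil

theorem isCycle_cycle14 : cycle14.IsCycle := by
  rw [Walk.isCycle_def, Walk.isTrail_def]
  exact ⟨by decide, by simp [cycle14], by decide⟩

end F20

/-- A longest cycle of `F₂,₀` has exactly 14 vertices: there is a cycle with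
14 vertices (a cycle has as many vertices as edges, i.e. its length), and
every cycle has at most 14 vertices. In particular `F₂,₀` is not Hamiltonian. -/
theorem F20_longest_cycle_has_fourteen_vertices :
    (∃ (u : Fin 15) (C : F20.Walk u u), C.IsCycle ∧ C.length = 14) ∧
    (∀ (u : Fin 15) (C : F20.Walk u u), C.IsCycle → C.length ≤ 14) := by
  refine ⟨⟨0, F20.cycle14, F20.isCycle_cycle14, rfl⟩, fun u C hC => ?_⟩
  have hle : C.length ≤ 15 := hC.length_le_card.trans_eq (Fintype.card_fin 15)
  have hne : C.length ≠ 15 := fun h => F20.not_isHamiltonianCycle C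
    (Walk.isHamiltonianCycle_iff_isCycle_and_length_eq.2 ⟨hC, by simpa using h⟩)
  omega
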